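/- (Theorem 3.5) Let α : ℝ → ℝ³ be a unit-speed spacelike Frenet curve with timelike binormal, with frame (T, N, B) and curvatures κ, τ, and assume τ(s) ≠ 0 for all s. Define β(s) = α(s) + (1/κ(s))·N(s) − ((1/τ(s))·(1/κ)′(s))·B(s). Then β′(s) = (τ(s)/κ(s) − ((1/τ)·(1/κ)′)′(s))·B(s) for all s. Moreover, assuming this coefficient is nonvanishing, β is a timelike curve, and there exists a fixed nonzero vector d ∈ ℝ³ such that s ↦ η(β′(s)/‖β′(s)‖, d) is constant if and only if there exists a fixed nonzero vector d ∈ ℝ³ such that s ↦ η(T(s), d) is constant; that is, β is a timelike general helix if and only if α is a spacelike general helix. -/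

import Mathlib

noncomputable section

/-- Lorentzian inner product on Minkowski 3-space. -/
def eta (u v : Fin 3 → ℝ) : ℝ := -(u 0 * v 0) + u 1 * v 1 + u 2 * v 2

/-- Lorentzian norm. -/
def lnorm (u : Fin 3 → ℝ) : ℝ := Real.sqrt |eta u u|

lemma eta_smul_left (a : ℝ) (u v : Fin 3 → ℝ) : eta (a • u) v = a * eta u v := by
  simp [eta, Pi.smul_apply, smul_eq_mul]; ring

lemma eta_hasDerivAt {V : ℝ → Fin 3 → ℝ} {V' : Fin 3 → ℝ} {s : ℝ}
    (h : HasDerivAt V V' s) (d : Fin 3 → ℝ) :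
    HasDerivAt (fun t => eta (V t) d) (eta V' d) s := by
  have h0 := hasDerivAt_pi.mp h 0
  have h1 := hasDerivAt_pi.mp h 1
  have h2 := hasDerivAt_pi.mp h 2
  exact (((h0.mul_const (d 0)).neg).add (h1.mul_const (d 1))).add (h2.mul_const (d 2))

lemma sign_key {g : ℝ → ℝ} (hc : Continuous g) (h0 : ∀ s, g s ≠ 0) (s t : ℝ) :
    0 < g s * g t := by
  rcases (h0 s).lt_or_gt with hs | hs <;> rcases (h0 t).lt_or_gt with ht | ht
  · exact mul_pos_of_neg_of_neg hs ht
  · exfalso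
    rcases le_total s t with h | h
    · obtain ⟨u, _, hu⟩ := intermediate_value_Icc h hc.continuousOn ⟨hs.le, ht.le⟩
      exact h0 u hu
    · obtain ⟨u, _, hu⟩ := intermediate_value_Icc' h hc.continuousOn ⟨hs.le, ht.le⟩
      exact h0 u hu
  · exfalso
    rcases le_total s t with h | h
    · obtain ⟨u, _, hu⟩ := intermediate_value_Icc' h hc.continuousOn ⟨ht.le, hs.le⟩
      exact h0 u hu
    · obtain ⟨u, _, hu⟩ := intermediate_value_Icc h hc.continuousOn ⟨ht.le, hs.le⟩
      exact h0 u hu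
  · exact mul_pos hs ht

theorem stmt5
    (α T N B : ℝ → Fin 3 → ℝ) (κ τ : ℝ → ℝ)
    (hαC : ContDiff ℝ (⊤ : ℕ∞) α) (hTC : ContDiff ℝ (⊤ : ℕ∞) T) (hNC : ContDiff ℝ (⊤ : ℕ∞) N)
    (hBC : ContDiff ℝ (⊤ : ℕ∞) B) (hκC : ContDiff ℝ (⊤ : ℕ∞) κ) (hτC : ContDiff ℝ (⊤ : ℕ∞) τ)
    (hT : ∀ s, deriv α s = T s)
    (hTT : ∀ s, eta (T s) (T s) = 1)
    (hNN : ∀ s, eta (N s) (N s) = 1)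
    (hBB : ∀ s, eta (B s) (B s) = -1)
    (hTN : ∀ s, eta (T s) (N s) = 0)
    (hTB : ∀ s, eta (T s) (B s) = 0)
    (hNB : ∀ s, eta (N s) (B s) = 0)
    (hκ : ∀ s, 0 < κ s)
    (hFr1 : ∀ s, deriv T s = κ s • N s)
    (hFr2 : ∀ s, deriv N s = (-κ s) • T s + τ s • B s)
    (hFr3 : ∀ s, deriv B s = τ s • N s)
    (hτ : ∀ s, τ s ≠ 0)
    (f g : ℝ → ℝ)
    (hf : ∀ s, f s = (τ s)⁻¹ * deriv (fun u => (κ u)⁻¹) s)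
    (hg : ∀ s, g s = τ s / κ s - deriv f s)
    (β : ℝ → Fin 3 → ℝ)
    (hβ : ∀ s, β s = α s + (κ s)⁻¹ • N s - f s • B s) :
    (∀ s, deriv β s = g s • B s) ∧
    ((∀ s, g s ≠ 0) →
      ((∀ s, eta (deriv β s) (deriv β s) < 0) ∧
       ((∃ d : Fin 3 → ℝ, d ≠ 0 ∧ ∃ c : ℝ, ∀ s, eta ((lnorm (deriv β s))⁻¹ • deriv β s) d = c) ↔ (∃ d : Fin 3 → ℝ, d ≠ 0 ∧ ∃ c : ℝ, ∀ s, eta (T s) d = c)))) := by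
  have hkC : ContDiff ℝ (↑(⊤:ℕ∞)) (fun u => (κ u)⁻¹) :=
    (hκC.inv fun s => (hκ s).ne').of_le (by simp)
  have hk'C : ContDiff ℝ (↑(⊤:ℕ∞)) (deriv fun u => (κ u)⁻¹) := (contDiff_infty_iff_deriv.mp hkC).2
  have hfC : ContDiff ℝ (↑(⊤:ℕ∞)) f := by
    have hfe : f = fun s => (τ s)⁻¹ * deriv (fun u => (κ u)⁻¹) s := funext hf
    rw [hfe]; exact ((hτC.inv hτ).of_le (by simp)).mul hk'C
  have hone : (1:WithTop ℕ∞) ≤ (↑(⊤:ℕ∞)) := by exact_mod_cast le_top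
  have hβfun : β = fun s => α s + (κ s)⁻¹ • N s - f s • B s := funext hβ
  -- derivative of β
  have hβ' : ∀ s, HasDerivAt β (g s • B s) s := by
    intro s
    have hα' : HasDerivAt α (T s) s := by
      have h := ((hαC.differentiable (by simp)) s).hasDerivAt
      rwa [hT] at h
    have hN' : HasDerivAt N ((-κ s) • T s + τ s • B s) s := by
      have h := ((hNC.differentiable (by simp)) s).hasDerivAt
      rwa [hFr2] at h
    have hB' : HasDerivAt B (τ s • N s) s := by
      have h := ((hBC.differentiable (by simp)) s).hasDerivAt
      rwa [hFr3] at h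
    have hk' : HasDerivAt (fun u => (κ u)⁻¹) (deriv (fun u => (κ u)⁻¹) s) s :=
      ((hkC.differentiable (by simp)) s).hasDerivAt
    have hf' : HasDerivAt f (deriv f s) s := ((hfC.differentiable (by simp)) s).hasDerivAt
    have h1 := (hα'.add (hk'.smul hN')).sub (hf'.smul hB')
    rw [hβfun]
    convert h1 using 1
    · rfl
    · rfl
    · rfl
    · rfl
    set D := deriv (fun u => (κ u)⁻¹) s with hD
    have hfτ : f s * τ s = D := by
      rw [hf s, mul_comm ((τ s)⁻¹) D, mul_assoc, inv_mul_cancel₀ (hτ s), mul_one]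
    funext i
    have hgs := hg s
    simp only [Pi.add_apply, Pi.sub_apply, Pi.smul_apply, smul_eq_mul]
    rw [hgs]
    have hκs := (hκ s).ne'
    field_simp
    linear_combination (N s i * κ s) * hfτ
  have hderiv : ∀ s, deriv β s = g s • B s := fun s => (hβ' s).deriv
  refine ⟨hderiv, fun hgne => ?_⟩
  have hsq : ∀ s, eta (deriv β s) (deriv β s) = -(g s ^ 2) := by
    intro s
    rw [hderiv s]
    have h1 : eta (g s • B s) (g s • B s) = g s ^ 2 * eta (B s) (B s) := by
      simp only [eta, Pi.smul_apply, smul_eq_mul]; ring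
    rw [h1, hBB s]; ring
  have htime : ∀ s, eta (deriv β s) (deriv β s) < 0 := by
    intro s
    rw [hsq s]
    have : 0 < g s ^ 2 := (sq_nonneg _).lt_of_ne (Ne.symm (pow_ne_zero 2 (hgne s)))
    linarith
  refine ⟨htime, ?_⟩
  -- sign of g is constant
  have hgCont : Continuous g := by
    have hge : g = fun s => τ s / κ s - deriv f s := funext hg
    rw [hge]
    exact ((hτC.continuous).div (hκC.continuous) fun s => (hκ s).ne').sub
      (contDiff_infty_iff_deriv.mp hfC).2.continuous
  set ε : ℝ := |g 0|⁻¹ * g 0 with hε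
  have hεne : ε ≠ 0 := by
    have : |g 0| ≠ 0 := abs_ne_zero.mpr (hgne 0)
    exact mul_ne_zero (inv_ne_zero this) (hgne 0)
  have hsign : ∀ s, |g s|⁻¹ * g s = ε := by
    intro s
    have hk := sign_key hgCont hgne s 0
    rcases (hgne 0).lt_or_gt with h0 | h0
    · have hs : g s < 0 := by nlinarith
      rw [hε, abs_of_neg hs, abs_of_neg h0, inv_neg, neg_mul, inv_mul_cancel₀ (hgne s),
        inv_neg, neg_mul, inv_mul_cancel₀ (hgne 0)]
    · have hs : 0 < g s := by nlinarith
      rw [hε, abs_of_pos hs, abs_of_pos h0, inv_mul_cancel₀ (hgne s), inv_mul_cancel₀ (hgne 0)]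
  have hunit : ∀ (s : ℝ) (d : Fin 3 → ℝ),
      eta ((lnorm (deriv β s))⁻¹ • deriv β s) d = ε * eta (B s) d := by
    intro s d
    have hln : lnorm (deriv β s) = |g s| := by
      rw [lnorm, hsq s, abs_neg, abs_of_nonneg (sq_nonneg _), Real.sqrt_sq_eq_abs]
    rw [hln, hderiv s, smul_smul, eta_smul_left, hsign s]
  -- key equivalence: eta(B,d) const ↔ eta(T,d) const
  have equivBT : ∀ d : Fin 3 → ℝ,
      (∃ c, ∀ s, eta (B s) d = c) ↔ (∃ c, ∀ s, eta (T s) d = c) := by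
    intro d
    have hTdiff : Differentiable ℝ (fun s => eta (T s) d) := fun s =>
      (eta_hasDerivAt ((hTC.differentiable (by simp) s).hasDerivAt) d).differentiableAt
    have hBdiff : Differentiable ℝ (fun s => eta (B s) d) := fun s =>
      (eta_hasDerivAt ((hBC.differentiable (by simp) s).hasDerivAt) d).differentiableAt
    have hdT : ∀ s, deriv (fun t => eta (T t) d) s = κ s * eta (N s) d := by
      intro s
      have h := eta_hasDerivAt ((hTC.differentiable (by simp) s).hasDerivAt) d
      rw [h.deriv, hFr1, eta_smul_left]
    have hdB : ∀ s, deriv (fun t => eta (B t) d) s = τ s * eta (N s) d := by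
      intro s
      have h := eta_hasDerivAt ((hBC.differentiable (by simp) s).hasDerivAt) d
      rw [h.deriv, hFr3, eta_smul_left]
    constructor
    · rintro ⟨c, hc⟩
      have hN0 : ∀ s, eta (N s) d = 0 := by
        intro s
        have h0 : deriv (fun t => eta (B t) d) s = 0 := by
          have hconst : (fun t => eta (B t) d) = fun _ => c := funext hc
          rw [hconst]; simp
        rw [hdB s] at h0
        exact (mul_eq_zero.mp h0).resolve_left (hτ s)
      refine ⟨eta (T 0) d, fun s => ?_⟩
      exact is_const_of_deriv_eq_zero hTdiff (fun x => by rw [hdT x, hN0 x, mul_zero]) s 0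
    · rintro ⟨c, hc⟩
      have hN0 : ∀ s, eta (N s) d = 0 := by
        intro s
        have h0 : deriv (fun t => eta (T t) d) s = 0 := by
          have hconst : (fun t => eta (T t) d) = fun _ => c := funext hc
          rw [hconst]; simp
        rw [hdT s] at h0
        exact (mul_eq_zero.mp h0).resolve_left (hκ s).ne'
      refine ⟨eta (B 0) d, fun s => ?_⟩
      exact is_const_of_deriv_eq_zero hBdiff (fun x => by rw [hdB x, hN0 x, mul_zero]) s 0
  constructor
  · rintro ⟨d, hd0, c, hc⟩
    refine ⟨d, hd0, ?_⟩
    apply (equivBT d).mp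
    refine ⟨ε⁻¹ * c, fun s => ?_⟩
    have h := hc s
    rw [hunit s d] at h
    field_simp [hεne]
    rw [mul_comm]
    exact h
  · rintro ⟨d, hd0, c, hc⟩
    obtain ⟨c', hc'⟩ := (equivBT d).mpr ⟨c, hc⟩
    exact ⟨d, hd0, ε * c', fun s => by rw [hunit s d, hc' s]⟩
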